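/- Let X and Y be independent random variables, both generalized Weibull-tail on ℝ₊ (nonnegative), with parameters 1/θ_x and 1/θ_y. Then P(XY ≥ z) ≥ e^{−z^{1/(θ_x+θ_y)} l(z)} for z large, where l(z) = l₁ˣ(z^{θ_x/(θ_x+θ_y)}) + l₁ʸ(z^{θ_y/(θ_x+θ_y)}) is slowly-varying, with l₁ˣ, l₁ʸ the slowly-varying functions in the lower tail bounds of X and Y. -/

import Mathlib

open MeasureTheory Filter Real Finset

noncomputable section

/-- A positive function `l` on `(0,∞)` is slowly varying if `l(tx)/l(x) → 1` as `x → ∞`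
for every `t > 0`. -/
def SlowlyVarying (l : ℝ → ℝ) : Prop :=
  (∀ x : ℝ, 0 < x → 0 < l x) ∧
    ∀ t : ℝ, 0 < t → Tendsto (fun x : ℝ => l (t * x) / l x) atTop (nhds 1)

/-- A positive function `r` is regularly varying with index `ρ` if `r(tx)/r(x) → t^ρ`. -/
def RegularlyVarying (r : ℝ → ℝ) (ρ : ℝ) : Prop :=
  (∀ᶠ x in atTop, 0 < r x) ∧
    ∀ t : ℝ, 0 < t → Tendsto (fun x : ℝ => r (t * x) / r x) atTop (nhds (t ^ ρ))

/-- Survival function `P(X ≥ x)`. -/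
def survival {Ω : Type*} [MeasurableSpace Ω] (μ : Measure Ω) (X : Ω → ℝ) (x : ℝ) : ℝ :=
  (μ {ω | x ≤ X ω}).toReal

/-- `X` is generalized Weibull-tail on `ℝ₊` with tail parameter `β`:
its survival function is sandwiched between Weibull-tail functions with parameter `β`
for `x` large enough. -/
def GWTpos {Ω : Type*} [MeasurableSpace Ω] (μ : Measure Ω) (X : Ω → ℝ) (β : ℝ) : Prop :=
  ∃ l₁ l₂ : ℝ → ℝ, SlowlyVarying l₁ ∧ SlowlyVarying l₂ ∧
    ∀ᶠ x in atTop, Real.exp (-(x ^ β * l₁ x)) ≤ survival μ X x ∧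
      survival μ X x ≤ Real.exp (-(x ^ β * l₂ x))

/-- `X` is generalized Weibull-tail on `ℝ` with tail parameter `β`: both its right tail
`P(X ≥ x)` and its left tail `P(X ≤ -x) = P(-X ≥ x)` are sandwiched between
Weibull-tail functions with parameter `β`. -/
def GWTreal {Ω : Type*} [MeasurableSpace Ω] (μ : Measure Ω) (X : Ω → ℝ) (β : ℝ) : Prop :=
  GWTpos μ X β ∧ GWTpos μ (fun ω => -X ω) β

/-- `X` is Weibull-tail on `ℝ₊` with tail parameter `β`: `P(X ≥ x) = exp (-x^β l(x))`
for `x > 0`, with `l` slowly varying. -/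
def WTpos {Ω : Type*} [MeasurableSpace Ω] (μ : Measure Ω) (X : Ω → ℝ) (β : ℝ) : Prop :=
  ∃ l : ℝ → ℝ, SlowlyVarying l ∧ ∀ x : ℝ, 0 < x →
    survival μ X x = Real.exp (-(x ^ β * l x))

/-- `X` is Weibull-tail on `ℝ` with tail parameter `β`: both tails are Weibull-tail. -/
def WTreal {Ω : Type*} [MeasurableSpace Ω] (μ : Measure Ω) (X : Ω → ℝ) (β : ℝ) : Prop :=
  WTpos μ X β ∧ WTpos μ (fun ω => -X ω) β

/-- `X` is symmetric: `X` and `-X` have the same distribution. -/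
def SymmetricRV {Ω : Type*} [MeasurableSpace Ω] (μ : Measure Ω) (X : Ω → ℝ) : Prop :=
  Measure.map X μ = Measure.map (fun ω => -X ω) μ

/-!
The event `{XY ≥ z}` contains `{X ≥ z^α} ∩ {Y ≥ z^β}` with `α = θx/(θx+θy)`, `β = θy/(θx+θy)`,
so by independence `P(XY ≥ z) ≥ P(X ≥ z^α) P(Y ≥ z^β)`. This split of `z` makes both Weibull
exponents equal, `(z^α)^(1/θx) = (z^β)^(1/θy) = z^(1/(θx+θy))`, so the two lower tail bounds
multiply to the claimed one.
-/

lemma add_div_add_le_max_div {a b c d : ℝ} (hc : 0 < c) (hd : 0 < d) :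
    (a + b) / (c + d) ≤ max (a / c) (b / d) := by
  rw [div_le_iff₀ (by positivity)]
  have ha : a ≤ max (a / c) (b / d) * c := (div_le_iff₀ hc).mp (le_max_left _ _)
  have hb : b ≤ max (a / c) (b / d) * d := (div_le_iff₀ hd).mp (le_max_right _ _)
  linarith

lemma min_div_le_add_div_add {a b c d : ℝ} (hc : 0 < c) (hd : 0 < d) :
    min (a / c) (b / d) ≤ (a + b) / (c + d) := by
  rw [le_div_iff₀ (by positivity)]
  have ha : min (a / c) (b / d) * c ≤ a := (le_div_iff₀ hc).mp (min_le_left _ _)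
  have hb : min (a / c) (b / d) * d ≤ b := (le_div_iff₀ hd).mp (min_le_right _ _)
  linarith

namespace SlowlyVarying

lemma add {f g : ℝ → ℝ} (hf : SlowlyVarying f) (hg : SlowlyVarying g) :
    SlowlyVarying (fun x => f x + g x) := by
  refine ⟨fun x hx => add_pos (hf.1 x hx) (hg.1 x hx), fun t ht => ?_⟩
  have hmin : Tendsto (fun x => min (f (t * x) / f x) (g (t * x) / g x)) atTop (nhds 1) := by
    simpa using (hf.2 t ht).min (hg.2 t ht)
  have hmax : Tendsto (fun x => max (f (t * x) / f x) (g (t * x) / g x)) atTop (nhds 1) := by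
    simpa using (hf.2 t ht).max (hg.2 t ht)
  refine tendsto_of_tendsto_of_tendsto_of_le_of_le' hmin hmax ?_ ?_
  · filter_upwards [eventually_gt_atTop 0] with x hx
    exact min_div_le_add_div_add (hf.1 x hx) (hg.1 x hx)
  · filter_upwards [eventually_gt_atTop 0] with x hx
    exact add_div_add_le_max_div (hf.1 x hx) (hg.1 x hx)

lemma comp_rpow {l : ℝ → ℝ} (hl : SlowlyVarying l) {a : ℝ} (ha : 0 < a) :
    SlowlyVarying (fun z => l (z ^ a)) := by
  refine ⟨fun x hx => hl.1 _ (rpow_pos_of_pos hx a), fun t ht => ?_⟩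
  refine ((hl.2 (t ^ a) (rpow_pos_of_pos ht a)).comp (tendsto_rpow_atTop ha)).congr' ?_
  filter_upwards [eventually_gt_atTop 0] with z hz
  simp only [Function.comp, mul_rpow ht.le hz.le]

end SlowlyVarying

lemma survival_mul_survival_le_survival_mul {Ω : Type*} [MeasurableSpace Ω] {μ : Measure Ω}
    [IsFiniteMeasure μ] {X Y : Ω → ℝ} (hindep : ProbabilityTheory.IndepFun X Y μ)
    {a b : ℝ} (ha : 0 ≤ a) (hb : 0 ≤ b) :
    survival μ X a * survival μ Y b ≤ survival μ (fun ω => X ω * Y ω) (a * b) := by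
  have hsub : {ω | a ≤ X ω} ∩ {ω | b ≤ Y ω} ⊆ {ω | a * b ≤ X ω * Y ω} :=
    fun ω ⟨hX, hY⟩ => mul_le_mul hX hY hb (ha.trans hX)
  have hprod : μ ({ω | a ≤ X ω} ∩ {ω | b ≤ Y ω}) = μ {ω | a ≤ X ω} * μ {ω | b ≤ Y ω} :=
    hindep.measure_inter_preimage_eq_mul (Set.Ici a) (Set.Ici b) measurableSet_Ici
      measurableSet_Ici
  unfold survival
  rw [← ENNReal.toReal_mul, ← hprod]
  exact ENNReal.toReal_mono (measure_ne_top _ _) (measure_mono hsub)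

lemma rpow_div_add_rpow_inv {z θ θ' : ℝ} (hz : 0 ≤ z) (hθ : 0 < θ) (hθ' : 0 < θ') :
    (z ^ (θ / (θ + θ'))) ^ (1 / θ) = z ^ (1 / (θ + θ')) := by
  rw [← rpow_mul hz]
  congr 1
  field_simp

theorem product_tail_lower_bound_general {Ω : Type*} [MeasurableSpace Ω]
    (μ : Measure Ω) [IsProbabilityMeasure μ] (X Y : Ω → ℝ)
    (θx θy : ℝ) (hθx : 0 < θx) (hθy : 0 < θy)
    (hindep : ProbabilityTheory.IndepFun X Y μ)
    (l1x l2x l1y l2y : ℝ → ℝ)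
    (hsv1x : SlowlyVarying l1x)
    (hsv1y : SlowlyVarying l1y)
    (hX : ∀ᶠ x in atTop,
      Real.exp (-(x ^ (1 / θx) * l1x x)) ≤ survival μ X x ∧
        survival μ X x ≤ Real.exp (-(x ^ (1 / θx) * l2x x)))
    (hY : ∀ᶠ x in atTop,
      Real.exp (-(x ^ (1 / θy) * l1y x)) ≤ survival μ Y x ∧
        survival μ Y x ≤ Real.exp (-(x ^ (1 / θy) * l2y x))) :
    SlowlyVarying (fun z : ℝ =>
        l1x (z ^ (θx / (θx + θy))) + l1y (z ^ (θy / (θx + θy)))) ∧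
      ∀ᶠ z in atTop,
        Real.exp (-(z ^ (1 / (θx + θy)) *
            (l1x (z ^ (θx / (θx + θy))) + l1y (z ^ (θy / (θx + θy)))))) ≤
          survival μ (fun ω => X ω * Y ω) z := by
  have hα : 0 < θx / (θx + θy) := by positivity
  have hβ : 0 < θy / (θx + θy) := by positivity
  refine ⟨(hsv1x.comp_rpow hα).add (hsv1y.comp_rpow hβ), ?_⟩
  filter_upwards [(tendsto_rpow_atTop hα).eventually hX, (tendsto_rpow_atTop hβ).eventually hY,
    eventually_gt_atTop 0] with z hXz hYz hz
  have hsplit : z ^ (θx / (θx + θy)) * z ^ (θy / (θx + θy)) = z := by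
    rw [← rpow_add hz, ← add_div, div_self (by positivity), rpow_one]
  calc Real.exp (-(z ^ (1 / (θx + θy)) *
          (l1x (z ^ (θx / (θx + θy))) + l1y (z ^ (θy / (θx + θy))))))
      = Real.exp (-((z ^ (θx / (θx + θy))) ^ (1 / θx) * l1x (z ^ (θx / (θx + θy))))) *
          Real.exp (-((z ^ (θy / (θx + θy))) ^ (1 / θy) * l1y (z ^ (θy / (θx + θy))))) := by
        rw [← exp_add, rpow_div_add_rpow_inv hz.le hθx hθy, add_comm θx θy,
          rpow_div_add_rpow_inv hz.le hθy hθx, add_comm θy θx]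
        ring_nf
    _ ≤ survival μ X (z ^ (θx / (θx + θy))) * survival μ Y (z ^ (θy / (θx + θy))) :=
        mul_le_mul hXz.1 hYz.1 (exp_pos _).le ((exp_pos _).le.trans hXz.1)
    _ ≤ survival μ (fun ω => X ω * Y ω) z := by
        simpa only [hsplit] using survival_mul_survival_le_survival_mul hindep
          (rpow_nonneg hz.le (θx / (θx + θy))) (rpow_nonneg hz.le (θy / (θx + θy)))

/-- Lower bound for the tail of a product of independent nonnegative generalized
Weibull-tail variables: `P(XY ≥ z) ≥ e^{-z^{1/(θx+θy)} l(z)}` for `z` large, with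
`l(z) = l₁ˣ(z^{θx/(θx+θy)}) + l₁ʸ(z^{θy/(θx+θy)})` slowly varying. -/
theorem product_tail_lower_bound {Ω : Type*} [MeasurableSpace Ω]
    (μ : Measure Ω) [IsProbabilityMeasure μ] (X Y : Ω → ℝ)
    (hmX : Measurable X) (hmY : Measurable Y)
    (hXnn : ∀ ω, 0 ≤ X ω) (hYnn : ∀ ω, 0 ≤ Y ω)
    (θx θy : ℝ) (hθx : 0 < θx) (hθy : 0 < θy)
    (hindep : ProbabilityTheory.IndepFun X Y μ)
    (l1x l2x l1y l2y : ℝ → ℝ)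
    (hsv1x : SlowlyVarying l1x) (hsv2x : SlowlyVarying l2x)
    (hsv1y : SlowlyVarying l1y) (hsv2y : SlowlyVarying l2y)
    (hX : ∀ᶠ x in atTop,
      Real.exp (-(x ^ (1 / θx) * l1x x)) ≤ survival μ X x ∧
        survival μ X x ≤ Real.exp (-(x ^ (1 / θx) * l2x x)))
    (hY : ∀ᶠ x in atTop,
      Real.exp (-(x ^ (1 / θy) * l1y x)) ≤ survival μ Y x ∧
        survival μ Y x ≤ Real.exp (-(x ^ (1 / θy) * l2y x))) :
    SlowlyVarying (fun z : ℝ =>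
        l1x (z ^ (θx / (θx + θy))) + l1y (z ^ (θy / (θx + θy)))) ∧
      ∀ᶠ z in atTop,
        Real.exp (-(z ^ (1 / (θx + θy)) *
            (l1x (z ^ (θx / (θx + θy))) + l1y (z ^ (θy / (θx + θy)))))) ≤
          survival μ (fun ω => X ω * Y ω) z :=
  product_tail_lower_bound_general μ X Y θx θy hθx hθy hindep l1x l2x l1y l2y hsv1x hsv1y hX hY
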